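/- Let (Λ, μ) be a probability space and let A : S² × Λ → {-1, 1} and B : S² × Λ → {-1, 1} be functions such that A(a, ·) and B(b, ·) are measurable for all a, b. Define E(a, b) = ∫_Λ A(a, λ) B(b, λ) dμ(λ). Then for all a₁, a₂, b₁, b₂ ∈ S², one has -2 ≤ E(a₁, b₁) + E(a₁, b₂) + E(a₂, b₁) - E(a₂, b₂) ≤ 2 (the CHSH inequality for local hidden variable models). -/

import Mathlib

/-! Rewriting the CHSH combination as `x₁ (y₁ + y₂) + x₂ (y₁ - y₂)` bounds it pointwise by
`|y₁ + y₂| + |y₁ - y₂| = 2 max |y₁| |y₂| ≤ 2`; since the four correlations are integrals of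
bounded products against the same probability measure, their CHSH combination is the integral
of this pointwise combination and is bounded by 2 as well. -/

open MeasureTheory Metric
open scoped RealInnerProductSpace

/-- The unit sphere in ℝ³. -/
noncomputable abbrev Sphere2 := Metric.sphere (0 : EuclideanSpace ℝ (Fin 3)) 1

theorem abs_chsh_le_two {x₁ x₂ y₁ y₂ : ℝ} (hx₁ : |x₁| ≤ 1) (hx₂ : |x₂| ≤ 1)
    (hy₁ : |y₁| ≤ 1) (hy₂ : |y₂| ≤ 1) :
    |x₁ * y₁ + x₁ * y₂ + x₂ * y₁ - x₂ * y₂| ≤ 2 :=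
  calc |x₁ * y₁ + x₁ * y₂ + x₂ * y₁ - x₂ * y₂|
      = |x₁ * (y₁ + y₂) + x₂ * (y₁ - y₂)| := by ring_nf
    _ ≤ |x₁| * |y₁ + y₂| + |x₂| * |y₁ - y₂| := by
      simpa only [abs_mul] using abs_add_le (x₁ * (y₁ + y₂)) (x₂ * (y₁ - y₂))
    _ ≤ 1 * |y₁ + y₂| + 1 * |y₁ - y₂| := by gcongr
    _ ≤ 2 := by
      cases abs_cases (y₁ + y₂) <;> cases abs_cases (y₁ - y₂) <;>
        linarith [abs_le.mp hy₁, abs_le.mp hy₂]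

section HiddenVariable

variable {Λ : Type*} [MeasurableSpace Λ] {μ : Measure Λ}

theorem integrable_mul_of_abs_le_one [IsFiniteMeasure μ] {f g : Λ → ℝ}
    (hf : AEStronglyMeasurable f μ) (hg : AEStronglyMeasurable g μ)
    (hf₁ : ∀ᵐ l ∂μ, |f l| ≤ 1) (hg₁ : ∀ᵐ l ∂μ, |g l| ≤ 1) :
    Integrable (fun l => f l * g l) μ :=
  Integrable.of_bound (hf.mul hg) 1 <| by
    filter_upwards [hf₁, hg₁] with l hfl hgl
    simpa only [Real.norm_eq_abs, abs_mul] using mul_le_one₀ hfl (abs_nonneg _) hgl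

theorem abs_chsh_integral_le_two [IsProbabilityMeasure μ] {f₁ f₂ g₁ g₂ : Λ → ℝ}
    (hf₁ : AEStronglyMeasurable f₁ μ) (hf₂ : AEStronglyMeasurable f₂ μ)
    (hg₁ : AEStronglyMeasurable g₁ μ) (hg₂ : AEStronglyMeasurable g₂ μ)
    (hf₁_le : ∀ᵐ l ∂μ, |f₁ l| ≤ 1) (hf₂_le : ∀ᵐ l ∂μ, |f₂ l| ≤ 1)
    (hg₁_le : ∀ᵐ l ∂μ, |g₁ l| ≤ 1) (hg₂_le : ∀ᵐ l ∂μ, |g₂ l| ≤ 1) :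
    |∫ l, f₁ l * g₁ l ∂μ + ∫ l, f₁ l * g₂ l ∂μ + ∫ l, f₂ l * g₁ l ∂μ
      - ∫ l, f₂ l * g₂ l ∂μ| ≤ 2 := by
  have h₁₁ := integrable_mul_of_abs_le_one hf₁ hg₁ hf₁_le hg₁_le
  have h₁₂ := integrable_mul_of_abs_le_one hf₁ hg₂ hf₁_le hg₂_le
  have h₂₁ := integrable_mul_of_abs_le_one hf₂ hg₁ hf₂_le hg₁_le
  have h₂₂ := integrable_mul_of_abs_le_one hf₂ hg₂ hf₂_le hg₂_le
  have h_sum : ∫ l, f₁ l * g₁ l ∂μ + ∫ l, f₁ l * g₂ l ∂μ + ∫ l, f₂ l * g₁ l ∂μ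
      - ∫ l, f₂ l * g₂ l ∂μ
      = ∫ l, (f₁ l * g₁ l + f₁ l * g₂ l + f₂ l * g₁ l - f₂ l * g₂ l) ∂μ := by
    rw [integral_sub, integral_add, integral_add] <;> fun_prop
  rw [h_sum, ← Real.norm_eq_abs]
  calc _ ≤ 2 * μ.real Set.univ := norm_integral_le_of_norm_le_const <| by
        filter_upwards [hf₁_le, hf₂_le, hg₁_le, hg₂_le] with l h₁ h₂ h₃ h₄
        exact abs_chsh_le_two h₁ h₂ h₃ h₄
    _ = 2 := by simp

end HiddenVariable

theorem chsh_inequality_for_lhv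
    {Λ : Type*} [MeasurableSpace Λ] (μ : Measure Λ) [IsProbabilityMeasure μ]
    (A B : Sphere2 → Λ → ℝ)
    (hA : ∀ a l, A a l = 1 ∨ A a l = -1)
    (hB : ∀ b l, B b l = 1 ∨ B b l = -1)
    (hAmeas : ∀ a, Measurable (A a))
    (hBmeas : ∀ b, Measurable (B b))
    (E : Sphere2 → Sphere2 → ℝ)
    (hE : ∀ a b, E a b = ∫ l, A a l * B b l ∂μ) :
    ∀ a₁ a₂ b₁ b₂ : Sphere2,
      -2 ≤ E a₁ b₁ + E a₁ b₂ + E a₂ b₁ - E a₂ b₂ ∧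
      E a₁ b₁ + E a₁ b₂ + E a₂ b₁ - E a₂ b₂ ≤ 2 := by
  intro a₁ a₂ b₁ b₂
  have hA_le : ∀ a, ∀ᵐ l ∂μ, |A a l| ≤ 1 := fun a =>
    ae_of_all _ fun l => by rcases hA a l with h | h <;> simp [h]
  have hB_le : ∀ b, ∀ᵐ l ∂μ, |B b l| ≤ 1 := fun b =>
    ae_of_all _ fun l => by rcases hB b l with h | h <;> simp [h]
  simp only [hE]
  exact abs_le.mp <| abs_chsh_integral_le_two
    (hAmeas a₁).aestronglyMeasurable (hAmeas a₂).aestronglyMeasurable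
    (hBmeas b₁).aestronglyMeasurable (hBmeas b₂).aestronglyMeasurable
    (hA_le a₁) (hA_le a₂) (hB_le b₁) (hB_le b₂)
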